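/- Let K and M be integers with 1 ≤ M and K > M+1, and let λ_1 ≥ λ_2 ≥ ⋯ ≥ λ_K > 0 be real numbers. Define Γ₀ = min over i ∈ {K−M,…,K} of min{1, p({i}, {K−M,…,K}∖{i}) · p_W(1) / (p(1, {2,…,M+1}) · p_W(i))}, and define R_LB = [ (K−M) − (K − M − K/(M+1)) · Γ₀ · (p(1, {2,…,M+1}) / p_W(1)) · C(K−1, M) ]^{−1}, where K/(M+1) denotes the real quotient. Then R_LB > 1/(K−M). -/

import Mathlib

/-- `lbar K lam T = Σ_{k ∈ {1,…,K} \ T} λ_k`. -/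
noncomputable def lbar (K : ℕ) (lam : ℕ → ℝ) (T : Finset ℕ) : ℝ :=
  ∑ k ∈ Finset.Icc 1 K \ T, lam k

/-- The joint pmf `p(w, s) = (1 / C(K,M)) · λ_w / λ_s̄`. -/
noncomputable def pjoint (K M : ℕ) (lam : ℕ → ℝ) (w : ℕ) (s : Finset ℕ) : ℝ :=
  (1 / (K.choose M : ℝ)) * (lam w / lbar K lam s)

/-- The marginal `p_W(w) = Σ_s p(w, s)`, summed over `M`-subsets of `{1,…,K} \ {w}`. -/
noncomputable def pW (K M : ℕ) (lam : ℕ → ℝ) (w : ℕ) : ℝ :=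
  ∑ s ∈ Finset.powersetCard M ((Finset.Icc 1 K).erase w), pjoint K M lam w s

/-- `Γ₀ = min_{i ∈ {K−M,…,K}} min{1, p(i, {K−M,…,K}∖{i}) · p_W(1) / (p(1, {2,…,M+1}) · p_W(i))}`. -/
noncomputable def gamma0 (K M : ℕ) (lam : ℕ → ℝ) : ℝ :=
  (Finset.Icc (K - M) K).inf' (Finset.nonempty_Icc.mpr (Nat.sub_le K M))
    (fun i => min 1
      (pjoint K M lam i ((Finset.Icc (K - M) K).erase i) * pW K M lam 1
        / (pjoint K M lam 1 (Finset.Icc 2 (M + 1)) * pW K M lam i)))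

/-- `Γ(w, s) = Γ₀ · p(1, {2,…,M+1}) · p_W(w) / (p(w, s) · p_W(1))`,
with an arbitrary constant `g0` in place of `Γ₀`. -/
noncomputable def gammaWS (K M : ℕ) (lam : ℕ → ℝ) (g0 : ℝ) (w : ℕ) (s : Finset ℕ) : ℝ :=
  g0 * pjoint K M lam 1 (Finset.Icc 2 (M + 1)) * pW K M lam w
    / (pjoint K M lam w s * pW K M lam 1)

/-- The lower bound `R_LB` on the capacity achieved by the RCS scheme. -/
noncomputable def RLB (K M : ℕ) (lam : ℕ → ℝ) : ℝ :=
  ((K : ℝ) - M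
    - ((K : ℝ) - M - (K : ℝ) / (M + 1)) * gamma0 K M lam
      * (pjoint K M lam 1 (Finset.Icc 2 (M + 1)) / pW K M lam 1)
      * ((K - 1).choose M : ℝ))⁻¹

/-!
Monotonicity makes `{K−M,…,K−1}` the `M`-subset of `{1,…,K−1}` of smallest total popularity, so
`p(K, ·)` is minimal there and `C(K−1, M) · p(K, {K−M,…,K−1}) ≤ p_W(K)`. Taking `i = K` in the
minimum defining `Γ₀` then gives `Γ₀ · C(K−1, M) · p(1, {2,…,M+1}) / p_W(1) ≤ 1`, so the quantity
subtracted from `K − M` in `R_LB` is positive (as `Γ₀ > 0` and `M ≥ 1`) and at most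
`K − M − K/(M+1) < K − M`.
-/

theorem Finset.sum_le_sum_of_card_eq_of_sdiff_le_of_le_sdiff {ι β : Type*} [DecidableEq ι]
    [AddCommMonoid β] [PartialOrder β] [IsOrderedAddMonoid β] {f : ι → β} {s t : Finset ι}
    (a : β) (hcard : t.card = s.card) (ht : ∀ k ∈ t \ s, f k ≤ a) (hs : ∀ k ∈ s \ t, a ≤ f k) :
    ∑ k ∈ t, f k ≤ ∑ k ∈ s, f k := by
  have hsdiff : ∑ k ∈ t \ s, f k ≤ ∑ k ∈ s \ t, f k :=
    calc ∑ k ∈ t \ s, f k ≤ (t \ s).card • a := Finset.sum_le_card_nsmul _ _ _ ht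
      _ = (s \ t).card • a := by rw [Finset.card_sdiff_comm hcard]
      _ ≤ ∑ k ∈ s \ t, f k := Finset.card_nsmul_le_sum _ _ _ hs
  rw [← Finset.sum_inter_add_sum_sdiff t s, ← Finset.sum_inter_add_sum_sdiff s t,
    Finset.inter_comm]
  exact add_le_add_right hsdiff _

theorem sum_Ico_le_sum_of_antitoneOn {f : ℕ → ℝ} {a b m : ℕ} (hf : AntitoneOn f (Set.Icc a b))
    (hm : a + m ≤ b) {s : Finset ℕ} (hs : s ⊆ Finset.Ico a b) (hcard : s.card = m) :
    ∑ k ∈ Finset.Ico (b - m) b, f k ≤ ∑ k ∈ s, f k := by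
  have hb : b - m ∈ Set.Icc a b := ⟨by omega, by omega⟩
  refine Finset.sum_le_sum_of_card_eq_of_sdiff_le_of_le_sdiff (f (b - m))
    (by rw [Nat.card_Ico, hcard]; omega) (fun k hk => ?_) (fun k hk => ?_)
  · obtain ⟨hkt, -⟩ := Finset.mem_sdiff.mp hk
    rw [Finset.mem_Ico] at hkt
    exact hf hb ⟨by omega, hkt.2.le⟩ hkt.1
  · obtain ⟨hks, hkt⟩ := Finset.mem_sdiff.mp hk
    have hk' := Finset.mem_Ico.mp (hs hks)
    rw [Finset.mem_Ico] at hkt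
    exact hf ⟨hk'.1, hk'.2.le⟩ hb (by omega)

section Popularity

variable {K M : ℕ} {lam : ℕ → ℝ}

theorem lbar_eq_sub {s : Finset ℕ} (hs : s ⊆ Finset.Icc 1 K) :
    lbar K lam s = ∑ k ∈ Finset.Icc 1 K, lam k - ∑ k ∈ s, lam k :=
  Finset.sum_sdiff_eq_sub hs

theorem lbar_pos (hpos : ∀ i, 1 ≤ i → i ≤ K → 0 < lam i) {s : Finset ℕ} {w : ℕ}
    (hw : w ∈ Finset.Icc 1 K) (hws : w ∉ s) : 0 < lbar K lam s := by
  refine Finset.sum_pos (fun k hk => ?_) ⟨w, Finset.mem_sdiff.mpr ⟨hw, hws⟩⟩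
  obtain ⟨hk1, hkK⟩ := Finset.mem_Icc.mp (Finset.mem_sdiff.mp hk).1
  exact hpos k hk1 hkK

theorem pjoint_pos (hMK : M ≤ K) (hpos : ∀ i, 1 ≤ i → i ≤ K → 0 < lam i) {w : ℕ}
    (hw : w ∈ Finset.Icc 1 K) {s : Finset ℕ} (hws : w ∉ s) : 0 < pjoint K M lam w s := by
  have hchoose : (0 : ℝ) < K.choose M := by exact_mod_cast Nat.choose_pos hMK
  obtain ⟨hw1, hwK⟩ := Finset.mem_Icc.mp hw
  unfold pjoint
  have hlam := hpos w hw1 hwK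
  have hlbar := lbar_pos hpos hw hws
  positivity

theorem pjoint_le_pjoint {w : ℕ} {s t : Finset ℕ} (hw : 0 ≤ lam w) (hs : 0 < lbar K lam s)
    (hst : lbar K lam s ≤ lbar K lam t) : pjoint K M lam w t ≤ pjoint K M lam w s := by
  unfold pjoint
  gcongr

theorem pW_pos (hMK : M < K) (hpos : ∀ i, 1 ≤ i → i ≤ K → 0 < lam i) {w : ℕ}
    (hw : w ∈ Finset.Icc 1 K) : 0 < pW K M lam w := by
  refine Finset.sum_pos (fun s hs => ?_) ?_
  · exact pjoint_pos hMK.le hpos hw fun hws => by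
      simpa using (Finset.mem_powersetCard.mp hs).1 hws
  · rw [Finset.powersetCard_nonempty, Finset.card_erase_of_mem hw, Nat.card_Icc]
    omega

theorem pjoint_Ico_le_pjoint (hanti : AntitoneOn lam (Set.Icc 1 K))
    (hpos : ∀ i, 1 ≤ i → i ≤ K → 0 < lam i) (hMK : M < K) {s : Finset ℕ}
    (hs : s ∈ Finset.powersetCard M (Finset.Ico 1 K)) :
    pjoint K M lam K (Finset.Ico (K - M) K) ≤ pjoint K M lam K s := by
  obtain ⟨hs, hcard⟩ := Finset.mem_powersetCard.mp hs
  have hK : K ∈ Finset.Icc 1 K := Finset.mem_Icc.mpr ⟨by omega, le_rfl⟩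
  have hIcc : ∀ {t : Finset ℕ}, t ⊆ Finset.Ico 1 K → t ⊆ Finset.Icc 1 K :=
    fun ht => ht.trans Finset.Ico_subset_Icc_self
  refine pjoint_le_pjoint (hpos K (by omega) le_rfl).le
    (lbar_pos hpos hK fun hKs => by simpa using hs hKs) ?_
  rw [lbar_eq_sub (hIcc hs), lbar_eq_sub (hIcc (Finset.Ico_subset_Ico_left (by omega)))]
  exact sub_le_sub_left (sum_Ico_le_sum_of_antitoneOn hanti (by omega) hs hcard) _

theorem choose_mul_pjoint_Ico_le_pW (hanti : AntitoneOn lam (Set.Icc 1 K))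
    (hpos : ∀ i, 1 ≤ i → i ≤ K → 0 < lam i) (hMK : M < K) :
    ((K - 1).choose M : ℝ) * pjoint K M lam K (Finset.Ico (K - M) K) ≤ pW K M lam K := by
  rw [pW, Finset.Icc_erase_right]
  set q := pjoint K M lam K (Finset.Ico (K - M) K)
  calc ((K - 1).choose M : ℝ) * q = (Finset.powersetCard M (Finset.Ico 1 K)).card • q := by
        rw [Finset.card_powersetCard, Nat.card_Ico, nsmul_eq_mul]
    _ ≤ _ := Finset.card_nsmul_le_sum _ _ _ fun s hs => pjoint_Ico_le_pjoint hanti hpos hMK hs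

theorem gamma0_pos (hMK : M < K) (hpos : ∀ i, 1 ≤ i → i ≤ K → 0 < lam i) :
    0 < gamma0 K M lam := by
  have hmem : ∀ {i}, i ∈ Finset.Icc (K - M) K → i ∈ Finset.Icc 1 K := fun hi => by
    rw [Finset.mem_Icc] at hi ⊢
    omega
  have h1 : 1 ∈ Finset.Icc 1 K := Finset.mem_Icc.mpr ⟨le_rfl, by omega⟩
  have hc : 0 < pjoint K M lam 1 (Finset.Icc 2 (M + 1)) := pjoint_pos hMK.le hpos h1 (by simp)
  rw [gamma0, Finset.lt_inf'_iff]
  intro i hi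
  refine lt_min one_pos (div_pos (mul_pos ?_ (pW_pos hMK hpos h1)) (mul_pos hc ?_))
  · exact pjoint_pos hMK.le hpos (hmem hi) (Finset.notMem_erase i _)
  · exact pW_pos hMK hpos (hmem hi)

theorem gamma0_mul_choose_le_one (hanti : AntitoneOn lam (Set.Icc 1 K))
    (hpos : ∀ i, 1 ≤ i → i ≤ K → 0 < lam i) (hMK : M < K) :
    gamma0 K M lam * (pjoint K M lam 1 (Finset.Icc 2 (M + 1)) / pW K M lam 1)
      * ((K - 1).choose M : ℝ) ≤ 1 := by
  set c := pjoint K M lam 1 (Finset.Icc 2 (M + 1))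
  set q := pjoint K M lam K (Finset.Ico (K - M) K)
  set N : ℝ := ((K - 1).choose M : ℝ)
  have h1 : 1 ∈ Finset.Icc 1 K := Finset.mem_Icc.mpr ⟨le_rfl, by omega⟩
  have hK : K ∈ Finset.Icc 1 K := Finset.mem_Icc.mpr ⟨by omega, le_rfl⟩
  have hc : 0 < c := pjoint_pos hMK.le hpos h1 (by simp)
  have hP := pW_pos hMK hpos h1
  have hQ := pW_pos hMK hpos hK
  have hg : gamma0 K M lam ≤ q * pW K M lam 1 / (c * pW K M lam K) := by
    have h : gamma0 K M lam ≤ min 1 (pjoint K M lam K ((Finset.Icc (K - M) K).erase K)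
        * pW K M lam 1 / (c * pW K M lam K)) :=
      Finset.inf'_le _ (Finset.mem_Icc.mpr ⟨Nat.sub_le K M, le_rfl⟩)
    rw [Finset.Icc_erase_right] at h
    exact h.trans (min_le_right _ _)
  calc gamma0 K M lam * (c / pW K M lam 1) * N
      ≤ q * pW K M lam 1 / (c * pW K M lam K) * (c / pW K M lam 1) * N := by gcongr
    _ = N * q / pW K M lam K := by field_simp
    _ ≤ 1 := (div_le_one hQ).mpr (choose_mul_pjoint_Ico_le_pW hanti hpos hMK)

theorem gamma0_mul_choose_pos (hpos : ∀ i, 1 ≤ i → i ≤ K → 0 < lam i) (hMK : M < K) :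
    0 < gamma0 K M lam * (pjoint K M lam 1 (Finset.Icc 2 (M + 1)) / pW K M lam 1)
      * ((K - 1).choose M : ℝ) := by
  have h1 : 1 ∈ Finset.Icc 1 K := Finset.mem_Icc.mpr ⟨le_rfl, by omega⟩
  have hN : (0 : ℝ) < (K - 1).choose M := by exact_mod_cast Nat.choose_pos (by omega)
  exact mul_pos (mul_pos (gamma0_pos hMK hpos)
    (div_pos (pjoint_pos hMK.le hpos h1 (by simp)) (pW_pos hMK hpos h1))) hN

end Popularity

theorem sub_sub_div_succ_pos {K M : ℕ} (hM : 1 ≤ M) (hMK : M + 1 < K) :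
    0 < (K : ℝ) - M - K / (M + 1) := by
  have hM' : (1 : ℝ) ≤ M := by exact_mod_cast hM
  have hK : (M : ℝ) + 2 ≤ K := by exact_mod_cast hMK
  rw [sub_pos, div_lt_iff₀ (by positivity)]
  nlinarith

theorem stmt11 {K M : ℕ} (hM : 1 ≤ M) (hMK : M + 1 < K) (lam : ℕ → ℝ)
    (hmono : ∀ i j, 1 ≤ i → i ≤ j → j ≤ K → lam j ≤ lam i)
    (hpos : ∀ i, 1 ≤ i → i ≤ K → 0 < lam i) :
    1 / ((K : ℝ) - M) < RLB K M lam := by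
  have hanti : AntitoneOn lam (Set.Icc 1 K) := fun i hi j hj hij => hmono i j hi.1 hij hj.2
  set D := (K : ℝ) - M - K / (M + 1)
  set F := gamma0 K M lam * (pjoint K M lam 1 (Finset.Icc 2 (M + 1)) / pW K M lam 1)
    * ((K - 1).choose M : ℝ)
  have hD : 0 < D := sub_sub_div_succ_pos hM hMK
  have hF : F ≤ 1 := gamma0_mul_choose_le_one hanti hpos (by omega)
  have hF0 : 0 < F := gamma0_mul_choose_pos hpos (by omega)
  have hKM : 0 < (K : ℝ) / (M + 1) := div_pos (by exact_mod_cast (by omega : 0 < K)) (by positivity)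
  have hDF : D * F ≤ D := mul_le_of_le_one_right hD.le hF
  have hRLB : RLB K M lam = ((K : ℝ) - M - D * F)⁻¹ := by
    simp only [RLB, D, F, mul_assoc]
  rw [hRLB, one_div]
  exact inv_strictAnti₀ (by linarith) (by linarith [mul_pos hD hF0])
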